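/- arXiv:2108.13565 — 5 statements merged into one kernel-verified Lean document; each statement's English description precedes it below -/
import Mathlib

section
/- For every natural number n ≥ 7, the family of blocks B_j = {j, j + 1, j + 3} ⊆ ZMod n, for j ∈ ZMod n, is a combinatorial (n₃) configuration: the n blocks are pairwise distinct, each block has exactly 3 elements, every point of ZMod n lies in exactly 3 blocks, and any two distinct blocks intersect in at most one point. Consequently, combinatorial (n₃) configurations exist for every n ≥ 7. -/
/-!
The base block `{0, 1, 3}` is a Sidon set modulo `n ≥ 7`: its nonzero differences `±1, ±2, ±3`
are pairwise distinct, because all sums of two of its elements are at most `6 < n`. Two distinct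
translates of a Sidon set share at most one point (a second common point would express one
difference in two ways), which also forces the translates to be distinct. The blocks through a
point `x` are the translates by `x - d`, `d ∈ {0, 1, 3}`, so there are exactly three of them.
-/

open Finset Pointwise

def Finset.IsSidon {α : Type*} [Add α] (D : Finset α) : Prop :=
  ∀ a ∈ D, ∀ b ∈ D, ∀ c ∈ D, ∀ d ∈ D, a + d = b + c → a = b ∧ d = c ∨ a = c ∧ d = b

namespace Finset.IsSidon

variable {G : Type*} [AddCommGroup G] [DecidableEq G] {D : Finset G}

theorem card_inter_vadd_le_one (hD : D.IsSidon) {j k : G} (hjk : j ≠ k) :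
    ((j +ᵥ D) ∩ (k +ᵥ D)).card ≤ 1 := by
  refine card_le_one.2 fun x hx y hy => ?_
  simp only [mem_inter, mem_vadd_finset, vadd_eq_add] at hx hy
  obtain ⟨⟨a, ha, rfl⟩, b, hb, hab⟩ := hx
  obtain ⟨⟨c, hc, rfl⟩, d, hd, hcd⟩ := hy
  have : a + d = b + c := by
    rw [← sub_eq_zero, show a + d - (b + c) = j + a - (k + b) - (j + c - (k + d)) by abel,
      sub_eq_zero.2 hab.symm, sub_eq_zero.2 hcd.symm, sub_zero]
  rcases hD a ha b hb c hc d hd this with ⟨rfl, -⟩ | ⟨rfl, -⟩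
  · exact absurd (add_right_cancel hab).symm hjk
  · rfl

theorem vadd_injective (hD : D.IsSidon) (hcard : 1 < D.card) :
    Function.Injective (fun j : G => j +ᵥ D) := by
  intro j k hjk
  by_contra hne
  have := hD.card_inter_vadd_le_one hne
  simp only at hjk
  rw [hjk, inter_self, card_vadd_finset] at this
  omega

end Finset.IsSidon

theorem Finset.ncard_setOf_mem_vadd {G : Type*} [AddCommGroup G] [DecidableEq G] (D : Finset G)
    (x : G) :
    {j : G | x ∈ j +ᵥ D}.ncard = D.card := by
  have : {j : G | x ∈ j +ᵥ D} = (x - ·) '' D := by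
    ext j
    simp only [Set.mem_ofPred_eq, mem_vadd_finset, vadd_eq_add, Set.mem_image, mem_coe]
    exact exists_congr fun y => and_congr_right' (sub_eq_iff_eq_add.trans eq_comm).symm
  rw [this, Set.ncard_image_of_injective _ sub_right_injective, Set.ncard_coe_finset]

theorem Finset.IsSidon.image_natCast {n : ℕ} {D : Finset ℕ} (hD : D.IsSidon)
    (hsum : ∀ a ∈ D, ∀ b ∈ D, a + b < n) : (D.image (Nat.cast : ℕ → ZMod n)).IsSidon := by
  simp only [IsSidon, mem_image, forall_exists_index, and_imp]
  rintro _ a ha rfl _ b hb rfl _ c hc rfl _ d hd rfl h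
  have h' : a + d = b + c := by
    rw [← Nat.cast_add, ← Nat.cast_add, ZMod.natCast_eq_natCast_iff',
      Nat.mod_eq_of_lt (hsum a ha d hd), Nat.mod_eq_of_lt (hsum b hb c hc)] at h
    exact h
  rcases hD a ha b hb c hc d hd h' with ⟨rfl, rfl⟩ | ⟨rfl, rfl⟩ <;> simp

theorem ZMod.card_image_natCast_of_lt {n : ℕ} {D : Finset ℕ} (hD : ∀ a ∈ D, a < n) :
    (D.image (Nat.cast : ℕ → ZMod n)).card = D.card := by
  refine card_image_of_injOn fun a ha b hb h => ?_
  simpa [ZMod.natCast_eq_natCast_iff', Nat.mod_eq_of_lt (hD a ha), Nat.mod_eq_of_lt (hD b hb)]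
    using h

/-- For every `n ≥ 7`, the family `𝒞(n,1,3)` of blocks `{j, j+1, j+3} ⊆ ZMod n`
is a combinatorial `(n₃)` configuration: the blocks are pairwise distinct, each has exactly
3 elements, every point lies in exactly 3 blocks, and two distinct blocks meet in at most
one point. Hence combinatorial `(n₃)` configurations exist for every `n ≥ 7`. -/
theorem cyclic_n13_is_combinatorial_configuration (n : ℕ) (hn : 7 ≤ n) :
    Function.Injective (fun j : ZMod n => ({j, j + 1, j + 3} : Finset (ZMod n))) ∧
    (∀ j : ZMod n, ({j, j + 1, j + 3} : Finset (ZMod n)).card = 3) ∧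
    (∀ x : ZMod n, {j : ZMod n | x ∈ ({j, j + 1, j + 3} : Finset (ZMod n))}.ncard = 3) ∧
    (∀ j k : ZMod n, j ≠ k →
      (({j, j + 1, j + 3} : Finset (ZMod n)) ∩ ({k, k + 1, k + 3} : Finset (ZMod n))).card ≤ 1) := by
  set D : Finset (ZMod n) := ({0, 1, 3} : Finset ℕ).image Nat.cast
  have hblock (j : ZMod n) : ({j, j + 1, j + 3} : Finset (ZMod n)) = j +ᵥ D := by
    simp [D, image_insert, vadd_finset_insert]
  have hD : D.IsSidon :=
    IsSidon.image_natCast (by unfold IsSidon; decide)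
      (by simp only [mem_insert, mem_singleton]; omega)
  have hcard : D.card = 3 :=
    ZMod.card_image_natCast_of_lt (by simp only [mem_insert, mem_singleton]; omega)
  simp only [hblock]
  exact ⟨hD.vadd_injective (by omega), fun j => by rw [card_vadd_finset, hcard],
    fun x => by rw [ncard_setOf_mem_vadd, hcard], fun j k => hD.card_inter_vadd_le_one⟩
end

section
/- For every natural number n with 1 ≤ n ≤ 6, there is no combinatorial (n₃) configuration. That is, there is no family L : Fin n → Finset (Fin n) of n pairwise distinct blocks such that every block has exactly 3 elements, every point of Fin n lies in exactly 3 blocks, and any two distinct blocks intersect in at most one point. Combined with the construction 𝒞(n,1,3), combinatorial (n₃) configurations exist if and only if n ≥ 7. -/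
/-!
Fix a block `B`. Each of its points lies in `r - 1` further blocks, and no block other than `B`
contains two points of `B`, so these further blocks are pairwise distinct. Hence there are at least
`1 + |B| (r - 1)` blocks, which for `(n₃)` configurations gives `n ≥ 7`.
-/

open Finset

section

variable {ι α : Type*} [Fintype ι] [DecidableEq ι] [DecidableEq α] (L : ι → Finset α)

def blocksThrough (x : α) : Finset ι := univ.filter (fun j => x ∈ L j)

variable {L}

theorem disjoint_erase_blocksThrough {j : ι} (hmeet : ∀ k ≠ j, (L k ∩ L j).card ≤ 1)
    {x y : α} (hx : x ∈ L j) (hy : y ∈ L j) (hxy : x ≠ y) :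
    Disjoint ((blocksThrough L x).erase j) ((blocksThrough L y).erase j) := by
  rw [disjoint_left]
  intro k hkx hky
  have hkj : k ≠ j := ne_of_mem_erase hkx
  have hxk : x ∈ L k := (mem_filter.1 (mem_of_mem_erase hkx)).2
  have hyk : y ∈ L k := (mem_filter.1 (mem_of_mem_erase hky)).2
  have hpair : ({x, y} : Finset α) ⊆ L k ∩ L j := by
    simp [insert_subset_iff, hxk, hyk, hx, hy]
  have h2 : 2 ≤ (L k ∩ L j).card := card_pair hxy ▸ card_le_card hpair
  exact absurd (hmeet k hkj) (by omega)

theorem card_mul_pred_add_one_le_card {j : ι} {r : ℕ}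
    (hdeg : ∀ x ∈ L j, (blocksThrough L x).card = r)
    (hmeet : ∀ k ≠ j, (L k ∩ L j).card ≤ 1) :
    (L j).card * (r - 1) + 1 ≤ Fintype.card ι := by
  set others := (L j).biUnion fun x => (blocksThrough L x).erase j
  have hothers : others.card = (L j).card * (r - 1) := by
    rw [card_biUnion fun x hx y hy hxy => disjoint_erase_blocksThrough hmeet hx hy hxy,
      sum_congr rfl fun x hx => ?_, sum_const, smul_eq_mul]
    rw [card_erase_of_mem (by simpa [blocksThrough] using hx), hdeg x hx]
  have hj : j ∉ others := by
    simp only [others, mem_biUnion, not_exists, not_and]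
    intro x _ hx
    exact ne_of_mem_erase hx rfl
  calc (L j).card * (r - 1) + 1 = (insert j others).card := by
        rw [card_insert_of_notMem hj, hothers]
    _ ≤ Fintype.card ι := card_le_univ _

end

/-- For `1 ≤ n ≤ 6` there is no combinatorial `(n₃)` configuration: no family
of `n` pairwise distinct 3-element blocks of an `n`-element point set in which every point
lies in exactly 3 blocks and any two distinct blocks meet in at most one point. -/
theorem no_n3_configuration_of_le_six (n : ℕ) (h1 : 1 ≤ n) (h6 : n ≤ 6) :
    ¬ ∃ L : Fin n → Finset (Fin n),
        Function.Injective L ∧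
        (∀ j : Fin n, (L j).card = 3) ∧
        (∀ x : Fin n, (Finset.univ.filter (fun j : Fin n => x ∈ L j)).card = 3) ∧
        (∀ j k : Fin n, j ≠ k → (L j ∩ L k).card ≤ 1) := by
  rintro ⟨L, -, hcard, hdeg, hmeet⟩
  have h7 := card_mul_pred_add_one_le_card (j := ⟨0, h1⟩) (r := 3) (fun x _ => hdeg x)
    fun k hk => hmeet k _ hk
  rw [hcard, Fintype.card_fin] at h7
  omega
end

section
/- Fix natural numbers n, a, b with 1 ≤ a < b < n. If there exist distinct indices j, k ∈ ZMod n such that the blocks A = {j, j + a, j + b} and B = {k, k + a, k + b} of 𝒞(n, a, b) satisfy |A ∩ B| ≥ 2, then at least one of the following six equations holds: b = n − a, 2b = n + a, 2b = n + 2a, 2b = n, b = 2a, 2a = n. -/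
/-!
If `j + x₁ = k + y₁` and `j + x₂ = k + y₂` with offsets `xᵢ, yᵢ ∈ {0, a, b}`, then the nonzero
difference `k - j` has two representations `x₁ - y₁ ≡ x₂ - y₂ (mod n)`, i.e.
`x₁ + y₂ ≡ x₂ + y₁ (mod n)`. Both sides are natural numbers below `2n`, so they are equal or differ
by exactly `n`, and running through the offset patterns leaves only the six degenerate equations.
-/

def CyclicTableDegenerate (n a b : ℕ) : Prop :=
  a + b = n ∨ 2 * b = n + a ∨ 2 * b = n + 2 * a ∨ 2 * b = n ∨ b = 2 * a ∨ 2 * a = n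

lemma exists_offset_of_mem_block {n a b : ℕ} {j e : ZMod n}
    (h : e ∈ ({j, j + (a : ZMod n), j + (b : ZMod n)} : Finset (ZMod n))) :
    ∃ x : ℕ, (x = 0 ∨ x = a ∨ x = b) ∧ e = j + x := by
  simp only [Finset.mem_insert, Finset.mem_singleton] at h
  rcases h with h | h | h
  · exact ⟨0, Or.inl rfl, by simpa using h⟩
  · exact ⟨a, Or.inr (Or.inl rfl), h⟩
  · exact ⟨b, Or.inr (Or.inr rfl), h⟩

lemma ZMod.eq_or_eq_add_of_natCast_eq {n u v : ℕ} (h : (u : ZMod n) = v)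
    (hu : u < 2 * n) (hv : v < 2 * n) : u = v ∨ u = v + n ∨ v = u + n := by
  obtain ⟨c, hc⟩ := (ZMod.intCast_eq_intCast_iff_dvd_sub u v n).mp (mod_cast h)
  have hc_bounds : -2 < c ∧ c < 2 := by constructor <;> nlinarith
  obtain ⟨hc_lo, hc_hi⟩ := hc_bounds
  interval_cases c <;> omega

lemma cyclicTableDegenerate_of_repeated_difference {n a b x₁ y₁ x₂ y₂ : ℕ}
    (hab : a < b) (hbn : b < n)
    (hx₁ : x₁ = 0 ∨ x₁ = a ∨ x₁ = b) (hy₁ : y₁ = 0 ∨ y₁ = a ∨ y₁ = b)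
    (hx₂ : x₂ = 0 ∨ x₂ = a ∨ x₂ = b) (hy₂ : y₂ = 0 ∨ y₂ = a ∨ y₂ = b)
    (hx : x₁ ≠ x₂) (h₁ : x₁ ≠ y₁) (h₂ : x₂ ≠ y₂)
    (h : x₁ + y₂ = x₂ + y₁ ∨ x₁ + y₂ = x₂ + y₁ + n ∨ x₂ + y₁ = x₁ + y₂ + n) :
    CyclicTableDegenerate n a b := by
  unfold CyclicTableDegenerate
  rcases hx₁ with rfl | rfl | rfl <;> rcases hy₁ with rfl | rfl | rfl <;>
    rcases hx₂ with rfl | rfl | rfl <;> rcases hy₂ with rfl | rfl | rfl <;> omega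

theorem generalizedCyclic_degenerate_of_two_point_intersection_general (n a b : ℕ)
    (hab : a < b) (hbn : b < n)
    (h : ∃ j k : ZMod n, j ≠ k ∧
      2 ≤ (({j, j + (a : ZMod n), j + (b : ZMod n)} : Finset (ZMod n)) ∩
        ({k, k + (a : ZMod n), k + (b : ZMod n)} : Finset (ZMod n))).card) :
    a + b = n ∨ 2 * b = n + a ∨ 2 * b = n + 2 * a ∨ 2 * b = n ∨ b = 2 * a ∨ 2 * a = n := by
  obtain ⟨j, k, hjk, hcard⟩ := h
  obtain ⟨e₁, he₁, e₂, he₂, hne⟩ := Finset.one_lt_card.mp hcard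
  rw [Finset.mem_inter] at he₁ he₂
  obtain ⟨x₁, hx₁, rfl⟩ := exists_offset_of_mem_block he₁.1
  obtain ⟨y₁, hy₁, hy₁e⟩ := exists_offset_of_mem_block he₁.2
  obtain ⟨x₂, hx₂, rfl⟩ := exists_offset_of_mem_block he₂.1
  obtain ⟨y₂, hy₂, hy₂e⟩ := exists_offset_of_mem_block he₂.2
  have hsum : ((x₁ + y₂ : ℕ) : ZMod n) = ((x₂ + y₁ : ℕ) : ZMod n) := by
    push_cast
    linear_combination hy₁e - hy₂e
  have hx : x₁ ≠ x₂ := fun hx => hne (by rw [hx])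
  have h₁ : x₁ ≠ y₁ := by
    rintro rfl
    exact hjk (add_right_cancel hy₁e)
  have h₂ : x₂ ≠ y₂ := by
    rintro rfl
    exact hjk (add_right_cancel hy₂e)
  exact cyclicTableDegenerate_of_repeated_difference hab hbn hx₁ hy₁ hx₂ hy₂ hx h₁ h₂
    (ZMod.eq_or_eq_add_of_natCast_eq hsum (by omega) (by omega))

/-- If `1 ≤ a < b < n` and two distinct blocks `{j, j+a, j+b}` and
`{k, k+a, k+b}` of `𝒞(n, a, b)` share at least two points, then one of the six
degeneracy equations `a + b = n`, `2b = n + a`, `2b = n + 2a`, `2b = n`, `b = 2a`,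
`2a = n` must hold. -/
theorem generalizedCyclic_degenerate_of_two_point_intersection (n a b : ℕ)
    (ha : 1 ≤ a) (hab : a < b) (hbn : b < n)
    (h : ∃ j k : ZMod n, j ≠ k ∧
      2 ≤ (({j, j + (a : ZMod n), j + (b : ZMod n)} : Finset (ZMod n)) ∩
        ({k, k + (a : ZMod n), k + (b : ZMod n)} : Finset (ZMod n))).card) :
    a + b = n ∨ 2 * b = n + a ∨ 2 * b = n + 2 * a ∨ 2 * b = n ∨ b = 2 * a ∨ 2 * a = n :=
  generalizedCyclic_degenerate_of_two_point_intersection_general n a b hab hbn h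
end

section
/- Fix natural numbers n, a, b with 1 ≤ a < b < n, and for j ∈ ZMod n let B_j = {j, j + a, j + b}. Then the following are equivalent: (i) there exist distinct indices j, k ∈ ZMod n with B_j = B_k as sets (equivalently, |B_j ∩ B_k| = 3); (ii) 3 divides n, a = n/3, and b = 2n/3. Moreover, when (ii) holds, for every j ∈ ZMod n the block B_{j + n/3} is distinct in index from B_j but equal to it as a set. -/
/-!
If two blocks `{j, j + a, j + b}` and `{k, k + a, k + b}` coincide with `j ≠ k`, then `j` is
`k + a` or `k + b`, and chasing the other two elements through the block forces
`a + b = 0` and `3 a = 0` in `ZMod n`. For `0 < a < b < n` this pins down `a + b = n` and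
`3 a = n`, since both sums lie strictly between `0` and `2 n`. Conversely, if `3 a = 0` and
`b = 2 a`, translating by `a` permutes the block cyclically.
-/

section Translate

variable {R : Type*} [CommRing R] [DecidableEq R]

theorem add_eq_zero_and_three_mul_eq_zero_of_translate_eq {j k x y : R}
    (hx : x ≠ 0) (hy : y ≠ 0) (hxy : x ≠ y) (hjk : j ≠ k)
    (h : ({j, j + x, j + y} : Finset R) = {k, k + x, k + y}) :
    x + y = 0 ∧ 3 * x = 0 := by
  have hj : j ∈ ({k, k + x, k + y} : Finset R) := h ▸ by simp
  have hjx : j + x ∈ ({k, k + x, k + y} : Finset R) := h ▸ by simp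
  have hjy : j + y ∈ ({k, k + x, k + y} : Finset R) := h ▸ by simp
  simp only [Finset.mem_insert, Finset.mem_singleton] at hj hjx hjy
  clear h
  grind

theorem translate_eq_of_three_mul_eq_zero {x : R} (hx : 3 * x = 0) (j : R) :
    ({j + x, j + x + x, j + x + 2 * x} : Finset R) = {j, j + x, j + 2 * x} := by
  have hcycle : j + x + 2 * x = j := by linear_combination hx
  rw [hcycle, add_assoc, ← two_mul]
  ext
  simp only [Finset.mem_insert, Finset.mem_singleton]
  tauto

end Translate

theorem ZMod.natCast_inj_of_lt {n a b : ℕ} (ha : a < n) (hb : b < n) :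
    (a : ZMod n) = b ↔ a = b :=
  ⟨fun h => by simpa [ZMod.val_natCast_of_lt ha, ZMod.val_natCast_of_lt hb] using congrArg ZMod.val h,
    congrArg _⟩

theorem Nat.eq_div_three_of_dvd_add_of_dvd_three_mul {n a b : ℕ} (ha : 0 < a) (hab : a < b)
    (hbn : b < n) (hsum : n ∣ a + b) (h3 : n ∣ 3 * a) :
    3 ∣ n ∧ a = n / 3 ∧ b = 2 * n / 3 := by
  have hsum' : a + b = n := Nat.eq_of_dvd_of_lt_two_mul (by omega) hsum (by omega)
  have h3' : 3 * a = n := Nat.eq_of_dvd_of_lt_two_mul (by omega) h3 (by omega)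
  omega

theorem eq_div_three_of_generalizedCyclic_block_eq {n a b : ℕ} (ha : 0 < a) (hab : a < b)
    (hbn : b < n) {j k : ZMod n} (hjk : j ≠ k)
    (h : ({j, j + (a : ZMod n), j + (b : ZMod n)} : Finset (ZMod n))
      = {k, k + (a : ZMod n), k + (b : ZMod n)}) :
    3 ∣ n ∧ a = n / 3 ∧ b = 2 * n / 3 := by
  have hne_zero {c : ℕ} (hc : 0 < c) (hcn : c < n) : (c : ZMod n) ≠ 0 := by
    simpa using (ZMod.natCast_inj_of_lt hcn (hc.trans hcn)).not.mpr hc.ne'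
  obtain ⟨hsum, h3⟩ := add_eq_zero_and_three_mul_eq_zero_of_translate_eq
    (hne_zero ha (hab.trans hbn)) (hne_zero (ha.trans hab) hbn)
    ((ZMod.natCast_inj_of_lt (hab.trans hbn) hbn).not.mpr hab.ne) hjk h
  rw [← Nat.cast_add, ZMod.natCast_eq_zero_iff] at hsum
  rw [← Nat.cast_ofNat, ← Nat.cast_mul, ZMod.natCast_eq_zero_iff] at h3
  exact Nat.eq_div_three_of_dvd_add_of_dvd_three_mul ha hab hbn hsum h3

theorem generalizedCyclic_block_translate_eq {n : ℕ} (hn : 0 < n) (h3 : 3 ∣ n) (j : ZMod n) :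
    j + ((n / 3 : ℕ) : ZMod n) ≠ j ∧
      ({j + ((n / 3 : ℕ) : ZMod n), j + ((n / 3 : ℕ) : ZMod n) + ((n / 3 : ℕ) : ZMod n),
          j + ((n / 3 : ℕ) : ZMod n) + ((2 * n / 3 : ℕ) : ZMod n)} : Finset (ZMod n))
        = {j, j + ((n / 3 : ℕ) : ZMod n), j + ((2 * n / 3 : ℕ) : ZMod n)} := by
  obtain ⟨m, rfl⟩ := h3
  have h2m : 2 * (3 * m) / 3 = 2 * m := by omega
  have h3m : 3 * (m : ZMod (3 * m)) = 0 := by exact_mod_cast ZMod.natCast_self (3 * m)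
  rw [h2m, Nat.mul_div_cancel_left m three_pos, Nat.cast_mul, Nat.cast_ofNat]
  refine ⟨?_, translate_eq_of_three_mul_eq_zero h3m j⟩
  simpa using (ZMod.natCast_inj_of_lt (b := 0) (by omega) hn).not.mpr (by omega)

/-- For `1 ≤ a < b < n`, two blocks of `𝒞(n, a, b)` with distinct indices
coincide as sets iff `3 ∣ n`, `a = n/3` and `b = 2n/3`; and in that case, for every `j`,
the block indexed by `j + n/3` has index distinct from `j` but equals `B_j` as a set. -/
theorem generalizedCyclic_full_coincidence_iff (n a b : ℕ)
    (ha : 1 ≤ a) (hab : a < b) (hbn : b < n) :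
    ((∃ j k : ZMod n, j ≠ k ∧
        ({j, j + (a : ZMod n), j + (b : ZMod n)} : Finset (ZMod n))
          = ({k, k + (a : ZMod n), k + (b : ZMod n)} : Finset (ZMod n)))
      ↔ (3 ∣ n ∧ a = n / 3 ∧ b = 2 * n / 3)) ∧
    (3 ∣ n → a = n / 3 → b = 2 * n / 3 → ∀ j : ZMod n,
      j + ((n / 3 : ℕ) : ZMod n) ≠ j ∧
      ({j + ((n / 3 : ℕ) : ZMod n), j + ((n / 3 : ℕ) : ZMod n) + (a : ZMod n),
          j + ((n / 3 : ℕ) : ZMod n) + (b : ZMod n)} : Finset (ZMod n))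
        = ({j, j + (a : ZMod n), j + (b : ZMod n)} : Finset (ZMod n))) := by
  refine ⟨⟨fun ⟨_, _, hjk, h⟩ => eq_div_three_of_generalizedCyclic_block_eq ha hab hbn hjk h, ?_⟩, ?_⟩
  · rintro ⟨h3, rfl, rfl⟩
    exact ⟨_, 0, generalizedCyclic_block_translate_eq (by omega) h3 0⟩
  · rintro h3 rfl rfl
    exact generalizedCyclic_block_translate_eq (by omega) h3
end

section
/- Let n be an even natural number and let a, b be natural numbers with 1 ≤ a < b < n satisfying at least one of the six equations b = n − a, 2b = n + a, 2b = n + 2a, 2b = n, b = 2a, 2a = n, but with (a, b) ≠ (n/3, 2n/3). Then there exist distinct indices j, k ∈ ZMod n such that the blocks B_j = {j, j + a, j + b} and B_k = {k, k + a, k + b} of 𝒞(n, a, b) satisfy |B_j ∩ B_k| = 2. -/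
/-!
Blocks are translates of `B₀ = {0, a, b}`, so it suffices to find a shift `c ≠ 0` such that
exactly two of `0, a, b` lie in `B_c`. Each degeneracy equation is a coincidence between a point
of `B₀` and a point of `B_c` for a suitable `c`, which already puts two points of `B₀` into `B_c`;
the third one could only follow if `n = 3a` and `b = 2a`, the excluded pair.
-/

theorem ZMod.natCast_eq_natCast_iff_of_lt_two_mul {n x y : ℕ} (hx : x < 2 * n) (hy : y < 2 * n) :
    (x : ZMod n) = y ↔ x = y ∨ x = y + n ∨ y = x + n := by
  rw [ZMod.natCast_eq_natCast_iff']
  have hmod : ∀ z < 2 * n, z % n < n ∧ (z % n = z ∨ z % n + n = z) := fun z hz => by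
    refine ⟨Nat.mod_lt z (by omega), ?_⟩
    rcases lt_or_ge z n with h | h
    · exact .inl (Nat.mod_eq_of_lt h)
    · exact .inr (by rw [Nat.mod_eq_sub_mod h, Nat.mod_eq_of_lt (by omega)]; omega)
  have := hmod x hx
  have := hmod y hy
  omega

theorem ZMod.natCast_eq_zero_iff_of_lt_two_mul {n x : ℕ} (hx : x < 2 * n) :
    (x : ZMod n) = 0 ↔ x = 0 ∨ x = n := by
  rw [← Nat.cast_zero, natCast_eq_natCast_iff_of_lt_two_mul hx (by omega)]
  omega

theorem Finset.card_inter_eq_two {α : Type*} [DecidableEq α] {s t : Finset α} {p q : α}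
    (hpq : p ≠ q) (hp : p ∈ s) (hq : q ∈ s) (h : ∀ x ∈ s, x ∈ t ↔ x = p ∨ x = q) :
    (s ∩ t).card = 2 := by
  refine card_eq_two.mpr ⟨p, q, hpq, ext fun x => ?_⟩
  rw [mem_inter, mem_insert, mem_singleton]
  constructor
  · exact fun ⟨hs, ht⟩ => (h x hs).mp ht
  · rintro (rfl | rfl)
    exacts [⟨hp, (h _ hp).mpr (.inl rfl)⟩, ⟨hq, (h _ hq).mpr (.inr rfl)⟩]

def cyclicBlock (n a b : ℕ) (j : ZMod n) : Finset (ZMod n) := {j, j + a, j + b}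

theorem generalizedCyclic_two_point_intersection_general (n a b : ℕ)
    (hab : a < b) (hbn : b < n)
    (hdeg : a + b = n ∨ 2 * b = n + a ∨ 2 * b = n + 2 * a ∨ 2 * b = n ∨ b = 2 * a ∨ 2 * a = n)
    (hne : ¬ (a = n / 3 ∧ b = 2 * n / 3)) :
    ∃ j k : ZMod n, j ≠ k ∧
      (({j, j + (a : ZMod n), j + (b : ZMod n)} : Finset (ZMod n)) ∩
        ({k, k + (a : ZMod n), k + (b : ZMod n)} : Finset (ZMod n))).card = 2 := by
  suffices ∃ c p q : ℕ, (c : ZMod n) ≠ 0 ∧ (p : ZMod n) ≠ q ∧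
      (p : ZMod n) ∈ cyclicBlock n a b 0 ∧ (q : ZMod n) ∈ cyclicBlock n a b 0 ∧
      ∀ x ∈ cyclicBlock n a b 0, x ∈ cyclicBlock n a b c ↔ x = p ∨ x = q by
    obtain ⟨c, p, q, hc, hpq, hp, hq, h⟩ := this
    exact ⟨0, c, hc.symm, Finset.card_inter_eq_two hpq hp hq h⟩
  have hne' : 3 * a = n → b ≠ 2 * a := fun h₁ h₂ => hne ⟨by omega, by omega⟩
  -- the witnesses `(c, p, q)`; all points involved are casts of naturals below `2 * n`
  rcases hdeg with h | h | h | h | h | h <;>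
    [refine ⟨a, 0, a, ?_⟩; refine ⟨b, a, b, ?_⟩; refine ⟨b - a, a, b, ?_⟩;
      refine ⟨b, 0, b, ?_⟩; refine ⟨a, a, b, ?_⟩; refine ⟨a, 0, a, ?_⟩] <;>
  simp (disch := omega) only [cyclicBlock, Finset.mem_insert, Finset.mem_singleton,
    forall_eq_or_imp, forall_eq, ne_eq, eq_comm (a := (0 : ZMod n)), ← Nat.cast_add, zero_add,
    ZMod.natCast_eq_natCast_iff_of_lt_two_mul, ZMod.natCast_eq_zero_iff_of_lt_two_mul,
    true_or, or_true, iff_true, and_true, true_and] <;>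
  omega

/-- For `n` even and `1 ≤ a < b < n` satisfying at least one of the six
degeneracy equations but with `(a, b) ≠ (n/3, 2n/3)`, some two blocks of `𝒞(n, a, b)`
with distinct indices share exactly two points. -/
theorem generalizedCyclic_two_point_intersection (n a b : ℕ) (hn : 2 ∣ n)
    (ha : 1 ≤ a) (hab : a < b) (hbn : b < n)
    (hdeg : a + b = n ∨ 2 * b = n + a ∨ 2 * b = n + 2 * a ∨ 2 * b = n ∨ b = 2 * a ∨ 2 * a = n)
    (hne : ¬ (a = n / 3 ∧ b = 2 * n / 3)) :
    ∃ j k : ZMod n, j ≠ k ∧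
      (({j, j + (a : ZMod n), j + (b : ZMod n)} : Finset (ZMod n)) ∩
        ({k, k + (a : ZMod n), k + (b : ZMod n)} : Finset (ZMod n))).card = 2 :=
  generalizedCyclic_two_point_intersection_general n a b hab hbn hdeg hne
end
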